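/- Let Y ⊆ Φ⁺ be an ideal and D, D' ⊆ Φ⁺ rook placements. Then Y ∩ D = Y ∩ D' if and only if (R_D)_{i,j} = (R_{D'})_{i,j} for all (i,j) ∈ Y. -/

import Mathlib

/-- The set of positive roots of `A_{n-1}`, encoded as pairs `(i,j)` with `1 ≤ j < i ≤ n`. -/
def PhiPos (n : ℕ) : Finset (ℕ × ℕ) :=
  (Finset.Icc 1 n ×ˢ Finset.Icc 1 n).filter (fun p => p.2 < p.1)

/-- `D` is a rook placement: a subset of `Φ⁺` whose distinct elements never share
a row or a column. -/
def IsRP (n : ℕ) (D : Finset (ℕ × ℕ)) : Prop :=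
  D ⊆ PhiPos n ∧ ∀ p ∈ D, ∀ q ∈ D, p ≠ q → p.1 ≠ q.1 ∧ p.2 ≠ q.2
/-- The rank matrix: `(R_D)_{i,j} = #{(p,q) ∈ D : p ≥ i, q ≤ j}` for `i > j`, else `0`. -/
def RD (D : Finset (ℕ × ℕ)) (i j : ℕ) : ℕ :=
  if j < i then (D.filter (fun p => i ≤ p.1 ∧ p.2 ≤ j)).card else 0

/-- The partial order on rook placements: `D ≤ D'` iff `R_D ≤ R_{D'}` entrywise. -/
def rpLE (D D' : Finset (ℕ × ℕ)) : Prop := ∀ i j, RD D i j ≤ RD D' i j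

/-- Strict version of the order on rook placements. -/
def rpLT (D D' : Finset (ℕ × ℕ)) : Prop := rpLE D D' ∧ D ≠ D'
/-- The partial order `≼` on `Φ⁺`: `(a,b) ≼ (c,d)` iff `a ≤ c` and `b ≥ d`. -/
def Ple (p q : ℕ × ℕ) : Prop := p.1 ≤ q.1 ∧ q.2 ≤ p.2

/-- The strict order `≺` on `Φ⁺`. -/
def Plt (p q : ℕ × ℕ) : Prop := Ple p q ∧ p ≠ q

/-! Every rook counted by `(R_D)_{i,j}` at a cell `(i,j)` of the ideal `Y` is `≽ (i,j)`, hence lies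
in `Y`; so `R_D = R_{Y ∩ D}` on `Y`. Conversely, `[(i,j) ∈ D]` is the alternating sum of `R_D` over
the cells `(i,j), (i+1,j), (i,j-1), (i+1,j-1)`, all `≽ (i,j)`: each of them is in `Y` or outside
`Φ⁺`, where every rank matrix vanishes. -/

lemma mem_PhiPos {n : ℕ} {p : ℕ × ℕ} :
    p ∈ PhiPos n ↔ (1 ≤ p.1 ∧ p.1 ≤ n) ∧ (1 ≤ p.2 ∧ p.2 ≤ n) ∧ p.2 < p.1 := by
  simp [PhiPos, and_assoc]

lemma RD_eq_zero_of_notMem_PhiPos {n : ℕ} {D : Finset (ℕ × ℕ)} (hD : D ⊆ PhiPos n)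
    {i j : ℕ} (hij : (i, j) ∉ PhiPos n) : RD D i j = 0 := by
  rw [mem_PhiPos] at hij
  unfold RD
  split_ifs with hji
  · refine Finset.card_eq_zero.mpr (Finset.filter_eq_empty_iff.mpr fun p hp => ?_)
    have := mem_PhiPos.mp (hD hp)
    omega
  · rfl

lemma RD_add_RD_succ_pred (D : Finset (ℕ × ℕ)) {i j : ℕ} (hj : 1 ≤ j) (hij : j < i) :
    RD D i j + RD D (i + 1) (j - 1)
      = RD D (i + 1) j + RD D i (j - 1) + if (i, j) ∈ D then 1 else 0 := by
  simp only [RD, if_pos hij, if_pos (show j - 1 < i + 1 by omega), if_pos (show j < i + 1 by omega),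
    if_pos (show j - 1 < i by omega), Finset.card_filter,
    ← Finset.sum_ite_eq' D (i, j) (fun _ => 1), ← Finset.sum_add_distrib]
  refine Finset.sum_congr rfl fun ⟨a, b⟩ _ => ?_
  simp only [Prod.mk.injEq]
  split_ifs <;> omega

section Ideal

variable {n : ℕ} {Y : Finset (ℕ × ℕ)} (hIdeal : ∀ p ∈ Y, ∀ q ∈ PhiPos n, Ple p q → q ∈ Y)
include hIdeal

lemma RD_inter_of_mem {D : Finset (ℕ × ℕ)} (hD : D ⊆ PhiPos n) {i j : ℕ} (hij : (i, j) ∈ Y) :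
    RD (Y ∩ D) i j = RD D i j := by
  unfold RD
  split_ifs
  · congr 1
    ext p
    simp only [Finset.mem_filter, Finset.mem_inter]
    constructor
    · rintro ⟨⟨_, hpD⟩, hp⟩
      exact ⟨hpD, hp⟩
    · rintro ⟨hpD, hp⟩
      exact ⟨⟨hIdeal (i, j) hij p (hD hpD) hp, hpD⟩, hp⟩
  · rfl

lemma RD_eq_of_ple {D D' : Finset (ℕ × ℕ)} (hD : D ⊆ PhiPos n) (hD' : D' ⊆ PhiPos n)
    (h : ∀ p ∈ Y, RD D p.1 p.2 = RD D' p.1 p.2) {p q : ℕ × ℕ} (hp : p ∈ Y) (hpq : Ple p q) :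
    RD D q.1 q.2 = RD D' q.1 q.2 := by
  by_cases hq : q ∈ PhiPos n
  · exact h q (hIdeal p hp q hq hpq)
  · rw [RD_eq_zero_of_notMem_PhiPos hD hq, RD_eq_zero_of_notMem_PhiPos hD' hq]

lemma inter_subset_inter_of_RD_eq {D D' : Finset (ℕ × ℕ)} (hD : D ⊆ PhiPos n)
    (hD' : D' ⊆ PhiPos n) (h : ∀ p ∈ Y, RD D p.1 p.2 = RD D' p.1 p.2) :
    Y ∩ D ⊆ Y ∩ D' := by
  rintro ⟨i, j⟩ hp
  obtain ⟨hpY, hpD⟩ := Finset.mem_inter.mp hp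
  refine Finset.mem_inter.mpr ⟨hpY, by_contra fun hpD' => ?_⟩
  obtain ⟨-, ⟨hj, -⟩, hji⟩ := mem_PhiPos.mp (hD hpD)
  have agree (i' j' : ℕ) (hi : i ≤ i') (hj : j' ≤ j) : RD D i' j' = RD D' i' j' :=
    RD_eq_of_ple hIdeal hD hD' h hpY (q := (i', j')) ⟨hi, hj⟩
  have hD_rect := RD_add_RD_succ_pred D (i := i) (j := j) hj hji
  have hD'_rect := RD_add_RD_succ_pred D' (i := i) (j := j) hj hji
  rw [if_pos hpD] at hD_rect
  rw [if_neg hpD'] at hD'_rect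
  have := agree i j le_rfl le_rfl
  have := agree (i + 1) j (by omega) le_rfl
  have := agree i (j - 1) le_rfl (by omega)
  have := agree (i + 1) (j - 1) (by omega) (by omega)
  omega

end Ideal

theorem ideal_inter_eq_iff_rank_eq_general (n : ℕ) (Y : Finset (ℕ × ℕ))
    (hIdeal : ∀ p ∈ Y, ∀ q ∈ PhiPos n, Ple p q → q ∈ Y)
    (D D' : Finset (ℕ × ℕ)) (hD : IsRP n D) (hD' : IsRP n D') :
    Y ∩ D = Y ∩ D' ↔ ∀ p ∈ Y, RD D p.1 p.2 = RD D' p.1 p.2 := by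
  constructor
  · rintro hYD ⟨i, j⟩ hp
    rw [← RD_inter_of_mem hIdeal hD.1 hp, ← RD_inter_of_mem hIdeal hD'.1 hp, hYD]
  · intro h
    exact (inter_subset_inter_of_RD_eq hIdeal hD.1 hD'.1 h).antisymm
      (inter_subset_inter_of_RD_eq hIdeal hD'.1 hD.1 fun p hp => (h p hp).symm)

/-- If `Y ⊆ Φ⁺` is an ideal and `D, D'` are rook placements, then
`Y ∩ D = Y ∩ D'` iff `(R_D)_{i,j} = (R_{D'})_{i,j}` for all `(i,j) ∈ Y`. -/
theorem ideal_inter_eq_iff_rank_eq (n : ℕ) (Y : Finset (ℕ × ℕ))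
    (hY : Y ⊆ PhiPos n)
    (hIdeal : ∀ p ∈ Y, ∀ q ∈ PhiPos n, Ple p q → q ∈ Y)
    (D D' : Finset (ℕ × ℕ)) (hD : IsRP n D) (hD' : IsRP n D') :
    Y ∩ D = Y ∩ D' ↔ ∀ p ∈ Y, RD D p.1 p.2 = RD D' p.1 p.2 :=
  ideal_inter_eq_iff_rank_eq_general n Y hIdeal D D' hD hD'
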